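/- arXiv:2301.03402 — 3 statements merged into one kernel-verified Lean document; each statement's English description precedes it below -/
import Mathlib

section
/- Let ι be a countable type and H = ℓ²(ι;ℝ). Let 𝔠 : H →L[ℝ] H be a bounded self-adjoint operator, let b : ι → ℝ satisfy 0 < β ≤ b i ≤ M for all i (for some constants β, M), and let B : H →L[ℝ] H be the multiplication operator (B v) i = b i * v i. Suppose u ∈ H, u ≠ 0, λ ∈ ℝ and (B ∘ 𝔠) u = λ • u. Let F : ℕ → Finset ι be an exhaustion of ι. For each k, let C_k be a symmetric real matrix indexed by F k such that: (i) there is a constant K₀ with ‖C_k.mulVec v‖ ≤ K₀‖v‖ for all k and all v : F k → ℝ (Euclidean norms); (ii) for every w ∈ H with finite support, ‖C_k.mulVec (w|_{F k}) − (𝔠 w)|_{F k}‖ → 0 as k → ∞. Define A_k := D_k * C_k, where D_k is the diagonal matrix with diagonal entries b i, i ∈ F k. Then for every ε > 0 there exists K such that for all k ≥ K there is μ ∈ spectrum ℝ A_k with |μ − λ| < ε. -/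
open scoped InnerProductSpace ENNReal
open Matrix

/-- Euclidean norm of a vector indexed by a finite type. -/
noncomputable def euclNorm {α : Type*} [Fintype α] (v : α → ℝ) : ℝ :=
  ‖(WithLp.equiv 2 (α → ℝ)).symm v‖

lemma euclNorm_eq {α : Type*} [Fintype α] (v : α → ℝ) :
    euclNorm v = Real.sqrt (∑ i, v i ^ 2) := by
  unfold euclNorm
  rw [EuclideanSpace.norm_eq]
  congr 1
  refine Finset.sum_congr rfl fun i _ => ?_
  simp [Real.norm_eq_abs, sq_abs]

lemma euclNorm_nonneg {α : Type*} [Fintype α] (v : α → ℝ) : 0 ≤ euclNorm v :=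
  norm_nonneg _

lemma euclNorm_zero {α : Type*} [Fintype α] : euclNorm (0 : α → ℝ) = 0 := by
  simp [euclNorm_eq]

lemma euclNorm_mono {α : Type*} [Fintype α] (f g : α → ℝ) (c : ℝ) (hc : 0 ≤ c)
    (h : ∀ i, |f i| ≤ c * |g i|) : euclNorm f ≤ c * euclNorm g := by
  rw [euclNorm_eq, euclNorm_eq, ← Real.sqrt_sq hc, ← Real.sqrt_mul (sq_nonneg c)]
  apply Real.sqrt_le_sqrt
  rw [Finset.mul_sum]
  refine Finset.sum_le_sum fun i _ => ?_
  have h2 := h i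
  nlinarith [abs_nonneg (f i), abs_nonneg (g i), sq_abs (f i), sq_abs (g i)]

lemma euclNorm_add3 {α : Type*} [Fintype α] (f p q r : α → ℝ)
    (h : ∀ i, f i = p i + q i + r i) :
    euclNorm f ≤ euclNorm p + euclNorm q + euclNorm r := by
  have hf : (WithLp.equiv 2 (α → ℝ)).symm f
      = (WithLp.equiv 2 (α → ℝ)).symm p + (WithLp.equiv 2 (α → ℝ)).symm q
        + (WithLp.equiv 2 (α → ℝ)).symm r := by
    ext i
    simpa using h i
  unfold euclNorm
  rw [hf]
  exact norm_add₃_le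

lemma sub_mulVec_eq {n : Type*} [Fintype n] [DecidableEq n]
    (A : Matrix n n ℝ) (μ : ℝ) (v : n → ℝ) :
    (algebraMap ℝ (Matrix n n ℝ) μ - A).mulVec v = μ • v - A.mulVec v := by
  rw [Matrix.sub_mulVec]
  congr 1
  rw [Algebra.algebraMap_eq_smul_one, Matrix.smul_mulVec, Matrix.one_mulVec]

lemma mem_spectrum_iff_eigen {n : Type*} [Fintype n] [DecidableEq n]
    (A : Matrix n n ℝ) (μ : ℝ) :
    μ ∈ spectrum ℝ A ↔ ∃ v : n → ℝ, v ≠ 0 ∧ A.mulVec v = μ • v := by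
  rw [spectrum.mem_iff]
  constructor
  · intro h
    have hdet : (algebraMap ℝ (Matrix n n ℝ) μ - A).det = 0 := by
      by_contra hd
      exact h (Matrix.isUnit_iff_isUnit_det _ |>.2 (isUnit_iff_ne_zero.2 hd))
    obtain ⟨v, hv0, hv⟩ := (Matrix.exists_mulVec_eq_zero_iff).2 hdet
    refine ⟨v, hv0, ?_⟩
    rw [sub_mulVec_eq, sub_eq_zero] at hv
    exact hv.symm
  · rintro ⟨v, hv0, hv⟩ hunit
    have hdet : (algebraMap ℝ (Matrix n n ℝ) μ - A).det ≠ 0 := by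
      intro h0
      have := Matrix.isUnit_iff_isUnit_det _ |>.1 hunit
      rw [h0] at this
      exact not_isUnit_zero this
    have hz : (algebraMap ℝ (Matrix n n ℝ) μ - A).mulVec v = 0 := by
      rw [sub_mulVec_eq, hv, sub_self]
    exact hdet ((Matrix.exists_mulVec_eq_zero_iff).1 ⟨v, hv0, hz⟩)

lemma approx_eigen {n : Type*} [Fintype n] [DecidableEq n]
    (S : Matrix n n ℝ) (hS : S.IsHermitian) (lam : ℝ) (x : n → ℝ) (hx : x ≠ 0) :
    ∃ μ ∈ spectrum ℝ S, |μ - lam| * euclNorm x ≤ euclNorm (S.mulVec x - lam • x) := by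
  classical
  set X : EuclideanSpace ℝ n := (WithLp.equiv 2 (n → ℝ)).symm x with hX
  set Y : EuclideanSpace ℝ n := (WithLp.equiv 2 (n → ℝ)).symm (S.mulVec x - lam • x) with hY
  have hXnorm : euclNorm x = ‖X‖ := rfl
  have hYnorm : euclNorm (S.mulVec x - lam • x) = ‖Y‖ := rfl
  set bb := hS.eigenvectorBasis with hbb
  set μ := hS.eigenvalues with hμdef
  have hT : S.transpose = S := by
    ext i j
    have := congrFun (congrFun hS.symm i) j
    simpa [Matrix.conjTranspose_apply] using this.symm
  have key : ∀ i, bb.repr Y i = (μ i - lam) * bb.repr X i := by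
    intro i
    rw [OrthonormalBasis.repr_apply_apply, OrthonormalBasis.repr_apply_apply]
    have hiY : ⟪(bb i : EuclideanSpace ℝ n), Y⟫_ℝ
        = (⇑(bb i)) ⬝ᵥ (S.mulVec x) - lam * ((⇑(bb i)) ⬝ᵥ x) := by
      simp only [PiLp.inner_apply, RCLike.inner_apply, starRingEnd_apply, star_trivial]
      simp only [hY, WithLp.equiv_symm_apply, PiLp.toLp_apply, Pi.sub_apply, Pi.smul_apply, smul_eq_mul]
      simp only [dotProduct, mul_sub, sub_mul, Finset.sum_sub_distrib, Finset.mul_sum,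
        PiLp.toLp_apply]
      congr 1 <;>
      refine Finset.sum_congr rfl fun j _ => ?_ <;>
      ring
    have hiX : ⟪(bb i : EuclideanSpace ℝ n), X⟫_ℝ = (⇑(bb i)) ⬝ᵥ x := by
      simp only [PiLp.inner_apply, RCLike.inner_apply, starRingEnd_apply, star_trivial]
      simp [hX, dotProduct, WithLp.equiv_symm_apply, PiLp.toLp_apply, mul_comm]
    have hdot : (⇑(bb i)) ⬝ᵥ (S.mulVec x) = μ i * ((⇑(bb i)) ⬝ᵥ x) := by
      rw [Matrix.dotProduct_mulVec, ← Matrix.mulVec_transpose, hT,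
        hS.mulVec_eigenvectorBasis, smul_dotProduct]
      simp [hμdef, hbb]
    rw [hiY, hiX, hdot]
    ring
  have hnX : ‖X‖ ^ 2 = ∑ i, (bb.repr X i) ^ 2 := by
    rw [← bb.repr.norm_map X, EuclideanSpace.norm_eq, Real.sq_sqrt (by positivity)]
    exact Finset.sum_congr rfl fun i _ => by simp [Real.norm_eq_abs, sq_abs]
  have hnY : ‖Y‖ ^ 2 = ∑ i, (bb.repr Y i) ^ 2 := by
    rw [← bb.repr.norm_map Y, EuclideanSpace.norm_eq, Real.sq_sqrt (by positivity)]
    exact Finset.sum_congr rfl fun i _ => by simp [Real.norm_eq_abs, sq_abs]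
  by_contra hcon
  push_neg at hcon
  have hstrict : ∀ i, ‖Y‖ < |μ i - lam| * ‖X‖ := by
    intro i
    have := hcon (μ i) (hS.eigenvalues_mem_spectrum_real i)
    rwa [hXnorm, hYnorm] at this
  have hXne : X ≠ 0 := by
    intro h0
    apply hx
    have : (WithLp.equiv 2 (n → ℝ)).symm x = (WithLp.equiv 2 (n → ℝ)).symm 0 := by
      simpa [hX] using h0
    exact (WithLp.equiv 2 (n → ℝ)).symm.injective this
  obtain ⟨i0, hi0⟩ : ∃ i, bb.repr X i ≠ 0 := by
    by_contra hall
    push_neg at hall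
    apply hXne
    apply bb.repr.map_eq_zero_iff.mp
    ext i
    simpa using hall i
  have hlt : ‖Y‖ ^ 2 * ‖X‖ ^ 2 < ‖X‖ ^ 2 * ‖Y‖ ^ 2 := by
    calc ‖Y‖ ^ 2 * ‖X‖ ^ 2 = ∑ i, ‖Y‖ ^ 2 * (bb.repr X i) ^ 2 := by
          rw [hnX, Finset.mul_sum]
      _ < ∑ i, (μ i - lam) ^ 2 * (bb.repr X i) ^ 2 * ‖X‖ ^ 2 := by
          apply Finset.sum_lt_sum
          · intro i _
            have h := hstrict i
            have hsq : ‖Y‖ ^ 2 ≤ (μ i - lam) ^ 2 * ‖X‖ ^ 2 := by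
              nlinarith [mul_self_le_mul_self (norm_nonneg Y) h.le, sq_abs (μ i - lam)]
            nlinarith [mul_le_mul_of_nonneg_right hsq (sq_nonneg (bb.repr X i))]
          · refine ⟨i0, Finset.mem_univ _, ?_⟩
            have h := hstrict i0
            have h2 : 0 < (bb.repr X i0) ^ 2 := by positivity
            have hsq : ‖Y‖ ^ 2 < (μ i0 - lam) ^ 2 * ‖X‖ ^ 2 := by
              nlinarith [mul_self_lt_mul_self (norm_nonneg Y) h, sq_abs (μ i0 - lam)]
            nlinarith [mul_lt_mul_of_pos_right hsq h2]
      _ = (∑ i, (μ i - lam) ^ 2 * (bb.repr X i) ^ 2) * ‖X‖ ^ 2 := by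
          rw [Finset.sum_mul]
      _ = ‖X‖ ^ 2 * ‖Y‖ ^ 2 := by
          rw [hnY, mul_comm]
          congr 1
          refine Finset.sum_congr rfl fun i _ => ?_
          rw [key i]
          ring
  nlinarith [hlt]

lemma norm_rpow_two_eq (x : ℝ) : ‖x‖ ^ (2 : ℝ≥0∞).toReal = x ^ 2 := by
  rw [ENNReal.toReal_ofNat, show ((2:ℝ)) = ((2:ℕ):ℝ) by norm_num, Real.rpow_natCast]
  simp [Real.norm_eq_abs, sq_abs]

lemma lp2_sq_summable {ι : Type*} (v : lp (fun _ : ι => ℝ) 2) :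
    Summable fun i => (v i : ℝ) ^ 2 := by
  have h := (memℓp_gen_iff (p := 2) (by norm_num)).1 (lp.memℓp v)
  exact h.congr fun i => norm_rpow_two_eq (v i)

lemma lp2_norm_eq {ι : Type*} (v : lp (fun _ : ι => ℝ) 2) :
    ‖v‖ = Real.sqrt (∑' i, (v i : ℝ) ^ 2) := by
  rw [lp.norm_eq_tsum_rpow (by norm_num) v, Real.sqrt_eq_rpow]
  rw [show (1 / (2:ℝ≥0∞).toReal) = (1/2 : ℝ) by norm_num]
  congr 1
  exact tsum_congr fun i => norm_rpow_two_eq (v i)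

lemma euclNorm_restrict_le {ι : Type*} (v : lp (fun _ : ι => ℝ) 2) (s : Finset ι) :
    euclNorm (fun i : s => (v i : ℝ)) ≤ ‖v‖ := by
  rw [euclNorm_eq, lp2_norm_eq]
  apply Real.sqrt_le_sqrt
  rw [Finset.sum_coe_sort s (fun i => (v i : ℝ) ^ 2)]
  exact Summable.sum_le_tsum s (fun i _ => sq_nonneg _) (lp2_sq_summable v)

/-- If the infinite generalized capacitance matrix `B𝔠` has a localized eigenmode `u` with
eigenvalue `λ`, then the finite matrices `A k = D k * C k` (defect diagonal times finite
capacitance matrix), being uniformly bounded and converging blockwise to `𝔠`, have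
eigenvalues converging to `λ`. -/
theorem defect_mode_convergence
    (ι : Type*) [Countable ι] [DecidableEq ι]
    (𝔠 : lp (fun _ : ι => ℝ) 2 →L[ℝ] lp (fun _ : ι => ℝ) 2)
    (h𝔠 : IsSelfAdjoint 𝔠)
    (b : ι → ℝ) (β M : ℝ) (hβ : 0 < β)
    (hb : ∀ i, β ≤ b i ∧ b i ≤ M)
    (B : lp (fun _ : ι => ℝ) 2 →L[ℝ] lp (fun _ : ι => ℝ) 2)
    (hB : ∀ (v : lp (fun _ : ι => ℝ) 2) (i : ι), B v i = b i * v i)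
    (u : lp (fun _ : ι => ℝ) 2) (hu : u ≠ 0) (lam : ℝ)
    (heig : B (𝔠 u) = lam • u)
    (F : ℕ → Finset ι) (hFmono : Monotone F) (hFexh : ∀ i : ι, ∃ k, i ∈ F k)
    (C : ∀ k : ℕ, Matrix (F k) (F k) ℝ)
    (hCsymm : ∀ k, (C k).IsSymm)
    (K₀ : ℝ)
    (hCbdd : ∀ (k : ℕ) (v : F k → ℝ), euclNorm ((C k).mulVec v) ≤ K₀ * euclNorm v)
    (hCconv : ∀ w : lp (fun _ : ι => ℝ) 2, {i : ι | w i ≠ 0}.Finite →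
      Filter.Tendsto
        (fun k : ℕ => euclNorm (fun i : F k =>
          (C k).mulVec (fun j : F k => w j) i - (𝔠 w) i))
        Filter.atTop (nhds 0))
    (A : ∀ k : ℕ, Matrix (F k) (F k) ℝ)
    (hA : ∀ k, A k = Matrix.diagonal (fun i : F k => b i) * C k) :
    ∀ ε > 0, ∃ K : ℕ, ∀ k ≥ K, ∃ μ ∈ spectrum ℝ (A k), |μ - lam| < ε := by
  classical
  intro ε hε
  -- basic positivity facts
  obtain ⟨i₀, hi₀⟩ : ∃ i, (u i : ℝ) ≠ 0 := by
    by_contra hall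
    push_neg at hall
    exact hu (lp.ext (funext fun i => by simpa using hall i))
  have hM : 0 < M := lt_of_lt_of_le hβ (le_trans (hb i₀).1 (hb i₀).2)
  set Nq : ℝ := Real.sqrt M with hNqdef
  have hNq : 0 < Nq := Real.sqrt_pos.2 hM
  have hbpos : ∀ i, 0 < b i := fun i => lt_of_lt_of_le hβ (hb i).1
  have hspos : ∀ i, 0 < Real.sqrt (b i) := fun i => Real.sqrt_pos.2 (hbpos i)
  have hsle : ∀ i, Real.sqrt (b i) ≤ Nq := fun i => Real.sqrt_le_sqrt (hb i).2
  have hss : ∀ i, Real.sqrt (b i) * Real.sqrt (b i) = b i :=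
    fun i => Real.mul_self_sqrt (hbpos i).le
  -- the eigen-equation pointwise
  have heigi : ∀ i : ι, b i * (𝔠 u i : ℝ) = lam * u i := by
    intro i
    have h1 : (B (𝔠 u) : ι → ℝ) i = (lam • u : lp (fun _ : ι => ℝ) 2) i := by rw [heig]
    rw [hB] at h1
    rw [h1, lp.coeFn_smul]
    simp
  -- sums of squares
  have htsum := lp2_sq_summable u
  set t : ℝ := ∑' i, (u i : ℝ) ^ 2 with htdef
  have ht : 0 < t := by
    have h1 : 0 < (u i₀ : ℝ) ^ 2 := by positivity
    exact lt_of_lt_of_le h1 (Summable.le_tsum htsum i₀ fun j _ => sq_nonneg _)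
  set P : ℕ → ℝ := fun k => ∑ i ∈ F k, (u i : ℝ) ^ 2 with hPdef
  have hP : Filter.Tendsto P Filter.atTop (nhds t) :=
    htsum.hasSum.comp (Filter.tendsto_atTop_finset_of_monotone hFmono hFexh)
  -- constants
  set c0 : ℝ := Real.sqrt (t / 2) / Nq with hc0def
  have hc0 : 0 < c0 := div_pos (Real.sqrt_pos.2 (by linarith)) hNq
  set εG : ℝ := ε * c0 / Nq with hεGdef
  have hεG : 0 < εG := div_pos (mul_pos hε hc0) hNq
  set K' : ℝ := max K₀ 0 with hK'def
  have hK' : 0 ≤ K' := le_max_right _ _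
  set Cop : ℝ := ‖𝔠‖ with hCopdef
  have hCop : 0 ≤ Cop := norm_nonneg _
  set δ : ℝ := εG / (2 * (K' + Cop + 1)) with hδdef
  have hδ : 0 < δ := div_pos hεG (by linarith)
  -- choose truncation m
  obtain ⟨m, hm⟩ : ∃ m, t - P m < δ ^ 2 := by
    have h0 : Filter.Tendsto (fun k => t - P k) Filter.atTop (nhds (t - t)) :=
      tendsto_const_nhds.sub hP
    rw [sub_self] at h0
    exact (h0.eventually_lt_const (by positivity)).exists
  -- the truncated vector w
  set wf : ι → ℝ := fun i => if i ∈ F m then (u i : ℝ) else 0 with hwfdef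
  have hwmem : Memℓp wf 2 := by
    apply memℓp_gen
    apply summable_of_ne_finset_zero (s := F m)
    intro i hi
    rw [show wf i = 0 from if_neg hi]
    simp [ENNReal.toReal_ofNat]
  set w : lp (fun _ : ι => ℝ) 2 := ⟨wf, hwmem⟩ with hwdef
  have hwcoe : ∀ i, (w i : ℝ) = wf i := fun i => rfl
  have hwfin : {i : ι | w i ≠ 0}.Finite := by
    apply Set.Finite.subset (F m).finite_toSet
    intro i hi
    by_contra hnot
    exact hi (by rw [hwcoe]; exact if_neg hnot)
  set r : lp (fun _ : ι => ℝ) 2 := u - w with hrdef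
  have hrcoe : ∀ i, (r i : ℝ) = if i ∈ F m then 0 else (u i : ℝ) := by
    intro i
    have : (r i : ℝ) = u i - w i := by rw [hrdef, lp.coeFn_sub]; simp
    rw [this, hwcoe, hwfdef]
    by_cases hi : i ∈ F m <;> simp [hi]
  have hrnorm : ‖r‖ < δ := by
    have hsq : ∀ i, (r i : ℝ) ^ 2 = (u i : ℝ) ^ 2 - (if i ∈ F m then (u i : ℝ) ^ 2 else 0) := by
      intro i
      rw [hrcoe]
      by_cases hi : i ∈ F m <;> simp [hi]
    have hsum2 : Summable fun i => (if i ∈ F m then (u i : ℝ) ^ 2 else 0) :=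
      summable_of_ne_finset_zero (s := F m) fun i hi => if_neg hi
    have htsum' : ∑' i, (r i : ℝ) ^ 2 = t - P m := by
      rw [tsum_congr hsq, Summable.tsum_sub htsum hsum2, ← htdef]
      congr 1
      rw [tsum_eq_sum (s := F m) (fun i hi => if_neg hi)]
      exact Finset.sum_congr rfl fun i hi => if_pos hi
    rw [lp2_norm_eq, htsum']
    calc Real.sqrt (t - P m) < Real.sqrt (δ ^ 2) := by
          apply Real.sqrt_lt_sqrt ?_ hm
          · rw [htsum'.symm]
            exact tsum_nonneg fun i => sq_nonneg _
      _ = δ := Real.sqrt_sq hδ.le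
  -- choose K
  have hconv := hCconv w hwfin
  have hev1 : ∀ᶠ k in Filter.atTop,
      euclNorm (fun i : F k => (C k).mulVec (fun j : F k => w j) i - (𝔠 w) i) < εG / 2 := by
    have := hconv.eventually_lt_const (show (0:ℝ) < εG / 2 by linarith)
    exact this
  have hev2 : ∀ᶠ k in Filter.atTop, t / 2 < P k :=
    hP.eventually_const_lt (by linarith)
  obtain ⟨K₁, hK₁⟩ := Filter.eventually_atTop.1 hev1
  obtain ⟨K₂, hK₂⟩ := Filter.eventually_atTop.1 hev2
  refine ⟨max K₁ K₂, fun k hk => ?_⟩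
  have hkK₁ : K₁ ≤ k := le_trans (le_max_left _ _) hk
  have hkK₂ : K₂ ≤ k := le_trans (le_max_right _ _) hk
  -- set up the symmetrized matrix
  set s' : F k → ℝ := fun i => Real.sqrt (b i) with hs'def
  set Smat : Matrix (F k) (F k) ℝ := Matrix.diagonal s' * C k * Matrix.diagonal s' with hSmatdef
  have hsd : (Matrix.diagonal s')ᴴ = Matrix.diagonal s' := by
    rw [Matrix.diagonal_conjTranspose]
    congr 1
  have hCh : (C k)ᴴ = C k := by
    rw [Matrix.conjTranspose_eq_transpose_of_trivial]
    exact hCsymm k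
  have hSherm : Smat.IsHermitian := by
    show Smatᴴ = Smat
    rw [hSmatdef, Matrix.conjTranspose_mul, Matrix.conjTranspose_mul, hsd, hCh,
      Matrix.mul_assoc]
  -- the test vector x
  set x : F k → ℝ := fun i => (u i : ℝ) / s' i with hxdef
  have hsx : ∀ i : F k, s' i * x i = (u i : ℝ) := by
    intro i
    simp only [hxdef]
    rw [mul_comm]
    exact div_mul_cancel₀ _ (hspos (i : ι)).ne' 
  have huFx : euclNorm (fun i : F k => (u i : ℝ)) ≤ Nq * euclNorm x := by
    apply euclNorm_mono _ _ _ hNq.le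
    intro i
    rw [← hsx i, abs_mul, abs_of_pos (hspos i)]
    exact mul_le_mul_of_nonneg_right (hsle i) (abs_nonneg _)
  have hPk : Real.sqrt (P k) = euclNorm (fun i : F k => (u i : ℝ)) := by
    rw [euclNorm_eq, Finset.sum_coe_sort (F k) (fun i => (u i : ℝ) ^ 2)]
  have hxlow : c0 ≤ euclNorm x := by
    have h1 : Real.sqrt (t / 2) ≤ Real.sqrt (P k) :=
      Real.sqrt_le_sqrt (hK₂ k hkK₂).le
    rw [hc0def, div_le_iff₀ hNq]
    calc Real.sqrt (t/2) ≤ Real.sqrt (P k) := h1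
      _ = euclNorm (fun i : F k => (u i : ℝ)) := hPk
      _ ≤ Nq * euclNorm x := huFx
      _ = euclNorm x * Nq := mul_comm _ _
  have hx0 : x ≠ 0 := by
    intro h0
    rw [h0, euclNorm_zero] at hxlow
    linarith
  -- approximate eigenvalue
  obtain ⟨μ, hμS, hμle⟩ := approx_eigen Smat hSherm lam x hx0
  -- residual identity
  set g : F k → ℝ := fun i => (C k).mulVec (fun j : F k => (u j : ℝ)) i - (𝔠 u i : ℝ)
    with hgdef
  have hres : ∀ i : F k, (Smat.mulVec x - lam • x) i = s' i * g i := by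
    intro i
    have hDx : (Matrix.diagonal s').mulVec x = fun j : F k => (u j : ℝ) := by
      funext j
      rw [Matrix.mulVec_diagonal]
      exact hsx j
    have h1 : Smat.mulVec x = fun i : F k =>
        s' i * (C k).mulVec (fun j : F k => (u j : ℝ)) i := by
      rw [hSmatdef, ← Matrix.mulVec_mulVec, ← Matrix.mulVec_mulVec, hDx]
      funext i
      rw [Matrix.mulVec_diagonal]
    have h2 : lam * x i = s' i * (𝔠 u i : ℝ) := by
      have h5 : s' i ≠ 0 := (hspos (i : ι)).ne'
      apply mul_left_cancel₀ h5
      have e1 : s' i * (lam * x i) = lam * (s' i * x i) := by ring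
      rw [e1, hsx i]
      have e2 : s' i * (s' i * (𝔠 u (i : ι) : ℝ)) = (s' i * s' i) * (𝔠 u (i : ι) : ℝ) := by
        ring
      rw [e2]
      have h8 : s' i * s' i = b (i : ι) := by simp only [hs'def]; exact hss (i : ι)
      rw [h8]
      exact (heigi (i : ι)).symm
    have e : (Smat.mulVec x - lam • x) i = Smat.mulVec x i - lam * x i := rfl
    rw [e, congrFun h1 i, h2]
    simp only [hgdef]
    ring
  have hresnorm : euclNorm (Smat.mulVec x - lam • x) ≤ Nq * euclNorm g := by
    apply euclNorm_mono _ _ _ hNq.le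
    intro i
    rw [hres i, abs_mul, abs_of_pos (hspos (i : ι))]
    exact mul_le_mul_of_nonneg_right (hsle (i : ι)) (abs_nonneg _)
  -- bound euclNorm g
  set g1 : F k → ℝ := fun i => (C k).mulVec (fun j : F k => (w j : ℝ)) i - (𝔠 w i : ℝ)
  set g2 : F k → ℝ := (C k).mulVec (fun j : F k => (r j : ℝ))
  set g3 : F k → ℝ := fun i => -(𝔠 r i : ℝ)
  have hgsplit : ∀ i : F k, g i = g1 i + g2 i + g3 i := by
    intro i
    have hu_split : (fun j : F k => (u j : ℝ))
        = (fun j : F k => (w j : ℝ)) + (fun j : F k => (r j : ℝ)) := by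
      funext j
      have : (r j : ℝ) = u j - w j := by rw [hrdef, lp.coeFn_sub]; simp
      simp [this]
    have hCu : (C k).mulVec (fun j : F k => (u j : ℝ)) i
        = (C k).mulVec (fun j : F k => (w j : ℝ)) i
          + (C k).mulVec (fun j : F k => (r j : ℝ)) i := by
      rw [hu_split, Matrix.mulVec_add]
      simp
    have h𝔠u : (𝔠 u i : ℝ) = 𝔠 w i + 𝔠 r i := by
      have : 𝔠 u = 𝔠 w + 𝔠 r := by
        rw [← map_add]
        congr 1
        rw [hrdef]
        abel
      rw [this, lp.coeFn_add]
      simp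
    simp only [hgdef, g1, g2, g3, hCu, h𝔠u]
    ring
  have hg1 : euclNorm g1 < εG / 2 := hK₁ k hkK₁
  have hg2 : euclNorm g2 ≤ K' * ‖r‖ := by
    calc euclNorm g2 ≤ K₀ * euclNorm (fun j : F k => (r j : ℝ)) := hCbdd k _
      _ ≤ K' * euclNorm (fun j : F k => (r j : ℝ)) :=
          mul_le_mul_of_nonneg_right (le_max_left _ _) (euclNorm_nonneg _)
      _ ≤ K' * ‖r‖ := mul_le_mul_of_nonneg_left (euclNorm_restrict_le r (F k)) hK'
  have hg3 : euclNorm g3 ≤ Cop * ‖r‖ := by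
    have hneg : euclNorm g3 = euclNorm (fun i : F k => (𝔠 r i : ℝ)) := by
      rw [euclNorm_eq, euclNorm_eq]
      congr 1
      exact Finset.sum_congr rfl fun i _ => by simp [g3]
    rw [hneg]
    calc euclNorm (fun i : F k => (𝔠 r i : ℝ)) ≤ ‖𝔠 r‖ := euclNorm_restrict_le (𝔠 r) (F k)
      _ ≤ Cop * ‖r‖ := 𝔠.le_opNorm r
  have hgtot : euclNorm g < εG := by
    have htr := euclNorm_add3 g g1 g2 g3 hgsplit
    have hKC : K' + Cop + 1 ≠ 0 := by linarith
    have hδeq : (K' + Cop + 1) * δ = εG / 2 := by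
      rw [hδdef]
      field_simp
    have hrn : 0 ≤ ‖r‖ := norm_nonneg _
    have h23 : (K' + Cop) * ‖r‖ ≤ (K' + Cop) * δ :=
      mul_le_mul_of_nonneg_left hrnorm.le (by linarith)
    have h24 : (K' + Cop) * δ ≤ (K' + Cop + 1) * δ :=
      mul_le_mul_of_nonneg_right (by linarith) hδ.le
    have he : (K' + Cop) * ‖r‖ = K' * ‖r‖ + Cop * ‖r‖ := by ring
    linarith [htr, hg1, hg2, hg3, he, h23, h24, hδeq]
  -- conclude the eigenvalue bound
  have hfinal : |μ - lam| < ε := by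
    have h1 : |μ - lam| * c0 ≤ Nq * euclNorm g :=
      le_trans (mul_le_mul_of_nonneg_left hxlow (abs_nonneg _))
        (le_trans hμle hresnorm)
    have h2 : Nq * euclNorm g < Nq * εG := mul_lt_mul_of_pos_left hgtot hNq
    have h3 : Nq * εG = ε * c0 := by
      rw [hεGdef]
      field_simp
    have h4 : |μ - lam| * c0 < ε * c0 := by
      rw [← h3]
      exact lt_of_le_of_lt h1 h2
    exact lt_of_mul_lt_mul_right h4 hc0.le
  -- transfer μ to the spectrum of A k
  obtain ⟨y, hy0, hySy⟩ := (mem_spectrum_iff_eigen Smat μ).1 hμS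
  set z : F k → ℝ := fun i => s' i * y i with hzdef
  have hz0 : z ≠ 0 := by
    obtain ⟨j, hj⟩ := Function.ne_iff.1 hy0
    refine Function.ne_iff.2 ⟨j, ?_⟩
    simp only [hzdef, Pi.zero_apply]
    exact mul_ne_zero (hspos (j : ι)).ne' (by simpa using hj)
  have hDy : (Matrix.diagonal s').mulVec y = z := by
    funext j
    rw [Matrix.mulVec_diagonal]
  have hS1 : ∀ i : F k, s' i * ((C k).mulVec z) i = μ * y i := by
    intro i
    have h6 := congrFun hySy i
    rw [hSmatdef] at h6
    rw [← Matrix.mulVec_mulVec] at h6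
    rw [← Matrix.mulVec_mulVec] at h6
    rw [hDy] at h6
    rw [Matrix.mulVec_diagonal] at h6
    simpa using h6
  have hAz : (A k).mulVec z = μ • z := by
    funext i
    rw [hA k, ← Matrix.mulVec_mulVec, Matrix.mulVec_diagonal]
    have h8 : b (i : ι) = s' i * s' i := by simp only [hs'def]; exact (hss (i : ι)).symm
    have h9 : (μ • z) i = μ * (s' i * y i) := by
      simp only [Pi.smul_apply, smul_eq_mul, hzdef]
    rw [h9, h8, mul_assoc, hS1 i]
    ring
  exact ⟨μ, (mem_spectrum_iff_eigen (A k) μ).2 ⟨z, hz0, hAz⟩, hfinal⟩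
end

section
/- Let ι be a countable type and H = ℓ²(ι;ℝ) with canonical orthonormal family (e_i). Let C : H →L[ℝ] H be a bounded self-adjoint operator. Let b : ι → ℝ satisfy b i > 0 for all i and b i = 1 for all i outside some finite subset of ι, and let B : H →L[ℝ] H be the multiplication operator (B v) i = b i * v i. Suppose u ∈ H, u ≠ 0, λ ∈ ℝ and (B ∘ C) u = λ • u. Let F : ℕ → Finset ι be an exhaustion of ι, and for each k define the matrix M_k indexed by F k by (M_k) i j := b i * ⟪e_i, C e_j⟫. Then for every ε > 0 there exists K such that for all k ≥ K there is μ ∈ spectrum ℝ M_k with |μ − λ| < ε. -/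
open scoped InnerProductSpace
open Matrix
open scoped ENNReal

lemma aux_matrix_mem_spectrum_iff {n : Type*} [Fintype n] [DecidableEq n]
    (A : Matrix n n ℝ) (μ : ℝ) :
    μ ∈ spectrum ℝ A ↔ ∃ x : n → ℝ, x ≠ 0 ∧ A.mulVec x = μ • x := by
  have halg : ∀ v : n → ℝ, (algebraMap ℝ (Matrix n n ℝ) μ - A) *ᵥ v = μ • v - A *ᵥ v := by
    intro v
    rw [Matrix.sub_mulVec, Algebra.algebraMap_eq_smul_one, Matrix.smul_mulVec,
      Matrix.one_mulVec]
  rw [spectrum.mem_iff, Matrix.isUnit_iff_isUnit_det, isUnit_iff_ne_zero, not_ne_iff,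
    ← Matrix.exists_mulVec_eq_zero_iff]
  constructor
  · rintro ⟨v, hv, h⟩
    rw [halg, sub_eq_zero] at h
    exact ⟨v, hv, h.symm⟩
  · rintro ⟨v, hv, h⟩
    exact ⟨v, hv, by rw [halg, h, sub_self]⟩

lemma aux_herm_residual {n : Type*} [Fintype n] [DecidableEq n] [Nonempty n]
    {A : Matrix n n ℝ} (hA : A.IsHermitian) (lam : ℝ) (w : EuclideanSpace ℝ n) :
    ∃ μ ∈ spectrum ℝ A, |μ - lam| * ‖w‖ ≤ ‖Matrix.toEuclideanLin A w - lam • w‖ := by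
  set T := Matrix.toEuclideanLin A with hT
  have hSym : (Matrix.toEuclideanLin A).IsSymmetric :=
    Matrix.isHermitian_iff_isSymmetric.mp hA
  set bb := hA.eigenvectorBasis with hbb
  set ev := hA.eigenvalues with hev
  have hTb : ∀ i, T (bb i) = ev i • bb i := by
    intro i
    ext j
    have h1 := congrFun (hA.mulVec_eigenvectorBasis i) j
    simpa [hT, hbb, hev, Matrix.toEuclideanLin_apply] using h1
  have key : ∀ i, ⟪(bb i : EuclideanSpace ℝ n), T w - lam • w⟫_ℝ
      = (ev i - lam) * ⟪(bb i : EuclideanSpace ℝ n), w⟫_ℝ := by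
    intro i
    rw [inner_sub_right, real_inner_smul_right, ← hSym (bb i) w, hTb i,
      real_inner_smul_left, sub_mul]
  have hpars : ∀ x : EuclideanSpace ℝ n,
      ‖x‖ ^ 2 = ∑ i, ⟪(bb i : EuclideanSpace ℝ n), x⟫_ℝ ^ 2 := by
    intro x
    have h1 : ‖x‖ = ‖bb.repr x‖ := (bb.repr.norm_map x).symm
    rw [h1, EuclideanSpace.norm_eq, Real.sq_sqrt (by positivity)]
    refine Finset.sum_congr rfl fun i _ => ?_
    rw [bb.repr_apply_apply, Real.norm_eq_abs, sq_abs]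
  obtain ⟨i0, -, hi0⟩ := Finset.exists_min_image Finset.univ
    (fun i => |ev i - lam|) Finset.univ_nonempty
  refine ⟨ev i0, hA.eigenvalues_mem_spectrum_real i0, ?_⟩
  have hsq : (ev i0 - lam) ^ 2 * ‖w‖ ^ 2 ≤ ‖T w - lam • w‖ ^ 2 := by
    rw [hpars (T w - lam • w), hpars w, Finset.mul_sum]
    refine Finset.sum_le_sum fun i _ => ?_
    rw [key i, mul_pow]
    have h2 : (ev i0 - lam) ^ 2 ≤ (ev i - lam) ^ 2 := by
      rw [← sq_abs (ev i0 - lam), ← sq_abs (ev i - lam)]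
      exact pow_le_pow_left₀ (abs_nonneg _) (hi0 i (Finset.mem_univ i)) 2
    exact mul_le_mul_of_nonneg_right h2 (sq_nonneg _)
  have h3 := Real.sqrt_le_sqrt hsq
  rwa [Real.sqrt_mul (sq_nonneg _), Real.sqrt_sq_eq_abs,
    Real.sqrt_sq (norm_nonneg _), Real.sqrt_sq (norm_nonneg _)] at h3

/-- If the defect matrix `B` is a compact perturbation of the identity (diagonal, positive,
equal to `1` off a finite set) and `B∘C` has a localized eigenmode `u ∈ ℓ²` with eigenvalue
`λ`, then the truncations `B_t C_t` (entrywise truncations of the infinite matrix of `B∘C`)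
have eigenvalues converging to `λ`. -/
theorem truncated_matrix_eigenvalue_convergence
    (ι : Type*) [Countable ι] [DecidableEq ι]
    (C : lp (fun _ : ι => ℝ) 2 →L[ℝ] lp (fun _ : ι => ℝ) 2)
    (hC : IsSelfAdjoint C)
    (b : ι → ℝ) (hbpos : ∀ i, 0 < b i)
    (S : Finset ι) (hb1 : ∀ i ∉ S, b i = 1)
    (B : lp (fun _ : ι => ℝ) 2 →L[ℝ] lp (fun _ : ι => ℝ) 2)
    (hB : ∀ (v : lp (fun _ : ι => ℝ) 2) (i : ι), B v i = b i * v i)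
    (u : lp (fun _ : ι => ℝ) 2) (hu : u ≠ 0) (lam : ℝ)
    (heig : B (C u) = lam • u)
    (F : ℕ → Finset ι) (hFmono : Monotone F) (hFexh : ∀ i : ι, ∃ k, i ∈ F k)
    (M : ∀ k : ℕ, Matrix (F k) (F k) ℝ)
    (hM : ∀ (k : ℕ) (i j : F k),
      M k i j = b i * ⟪lp.single 2 (i : ι) (1 : ℝ), C (lp.single 2 (j : ι) (1 : ℝ))⟫_ℝ) :
    ∀ ε > 0, ∃ K : ℕ, ∀ k ≥ K, ∃ μ ∈ spectrum ℝ (M k), |μ - lam| < ε := by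
  intro ε hε
  set e : ι → lp (fun _ : ι => ℝ) 2 := fun i => lp.single 2 i (1 : ℝ) with he
  -- coordinatewise eigenvalue equation
  have hcoord : ∀ i : ι, b i * (C u) i = lam * u i := by
    intro i
    have h1 : (B (C u) : ∀ _ : ι, ℝ) = ((lam • u : lp _ 2) : ∀ _ : ι, ℝ) :=
      congrArg _ heig
    have h2 := congrFun h1 i
    rw [hB] at h2
    rw [lp.coeFn_smul] at h2
    simpa using h2
  -- a nonzero coordinate of u
  obtain ⟨j0, hj0⟩ : ∃ j, u j ≠ 0 := by
    by_contra h
    push_neg at h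
    exact hu (lp.eq_zero_iff_coeFn_eq_zero.mpr (funext fun i => h i))
  obtain ⟨k0, hk0⟩ := hFexh j0
  -- truncations of u converge to u
  set uk : ℕ → lp (fun _ : ι => ℝ) 2 := fun k => ∑ j ∈ F k, lp.single 2 j (u j) with huk
  have hsum : HasSum (fun j : ι => lp.single 2 j (u j)) u :=
    lp.hasSum_single ENNReal.ofNat_ne_top u
  have htendF : Filter.Tendsto F Filter.atTop Filter.atTop :=
    Filter.tendsto_atTop_finset_of_monotone hFmono hFexh
  have htend : Filter.Tendsto (fun k => ‖uk k - u‖) Filter.atTop (nhds 0) := by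
    have h1 : Filter.Tendsto uk Filter.atTop (nhds u) := hsum.comp htendF
    exact tendsto_iff_norm_sub_tendsto_zero.mp h1
  -- constants
  set β : ℝ := 1 + ∑ i ∈ S, b i with hβ
  have hβ1 : (1 : ℝ) ≤ β :=
    le_add_of_nonneg_right (Finset.sum_nonneg fun i _ => (hbpos i).le)
  have hβb : ∀ i, b i ≤ β := by
    intro i
    by_cases hi : i ∈ S
    · exact le_add_of_nonneg_of_le zero_le_one
        (Finset.single_le_sum (fun j _ => (hbpos j).le) hi)
    · rw [hb1 i hi]; exact hβ1
  have hβpos : (0 : ℝ) < β := lt_of_lt_of_le one_pos hβ1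
  set c0 : ℝ := |u j0| / Real.sqrt (b j0) with hc0def
  have hc0 : 0 < c0 := div_pos (abs_pos.mpr hj0) (Real.sqrt_pos.mpr (hbpos j0))
  set δ : ℝ := ε * c0 / (Real.sqrt β * ‖C‖ + 1) with hδdef
  have hden : (0 : ℝ) < Real.sqrt β * ‖C‖ + 1 :=
    lt_of_lt_of_le one_pos (le_add_of_nonneg_left (by positivity))
  have hδ : 0 < δ := div_pos (mul_pos hε hc0) hden
  obtain ⟨K1, hK1⟩ := Filter.eventually_atTop.mp (htend.eventually (gt_mem_nhds hδ))
  refine ⟨max K1 k0, fun k hk => ?_⟩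
  have hkK1 : ‖uk k - u‖ < δ := hK1 k (le_trans (le_max_left _ _) hk)
  have hj0k : j0 ∈ F k := hFmono (le_trans (le_max_right _ _) hk) hk0
  haveI : Nonempty (F k) := ⟨⟨j0, hj0k⟩⟩
  -- the symmetric conjugated matrix
  set Amat : Matrix (F k) (F k) ℝ := fun i j => ⟪e (i : ι), C (e (j : ι))⟫_ℝ with hAmat
  set N : Matrix (F k) (F k) ℝ :=
    fun i j => Real.sqrt (b i) * Amat i j * Real.sqrt (b j) with hNdef
  have hCsym : ∀ x y, ⟪C x, y⟫_ℝ = ⟪x, C y⟫_ℝ :=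
    ContinuousLinearMap.isSelfAdjoint_iff_isSymmetric.mp hC
  have hAsymm : ∀ i j : F k, Amat i j = Amat j i := by
    intro i j
    rw [hAmat]
    dsimp only
    rw [← hCsym, real_inner_comm]
  have hN : N.IsHermitian := by
    rw [Matrix.IsHermitian]
    ext i j
    rw [Matrix.conjTranspose_apply, hNdef]
    dsimp only
    rw [star_trivial, hAsymm j i]
    ring
  -- coordinates of C
  have hCapp : ∀ (x : lp (fun _ : ι => ℝ) 2) (i : ι), ⟪e i, C x⟫_ℝ = (C x) i := by
    intro x i
    rw [he]
    dsimp only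
    rw [lp.inner_single_left]
    simp
  have hsingle : ∀ j : ι, lp.single 2 j (u j) = u j • e j := by
    intro j
    rw [he]
    dsimp only
    rw [← lp.single_smul]
    norm_num
  -- key summation identity
  have hsum_eq : ∀ i : F k, ∑ j : F k, Amat i j * u (j : ι) = (C (uk k)) (i : ι) := by
    intro i
    rw [← hCapp (uk k) i, huk]
    dsimp only
    rw [map_sum, inner_sum, ← Finset.sum_coe_sort (F k)
      (fun j => ⟪e (i : ι), C (lp.single 2 j (u j))⟫_ℝ)]
    refine Finset.sum_congr rfl fun j _ => ?_
    rw [hsingle, ContinuousLinearMap.map_smul, real_inner_smul_right]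
    rw [hAmat]
    dsimp only
    ring
  -- the test vector
  set w : EuclideanSpace ℝ (F k) :=
    (WithLp.equiv 2 _).symm (fun i : F k => u (i : ι) / Real.sqrt (b (i : ι))) with hw
  have hwapp : ∀ i : F k, w i = u (i : ι) / Real.sqrt (b (i : ι)) := fun i => rfl
  -- residual coordinates
  have hres : ∀ i : F k, (Matrix.toEuclideanLin N w - lam • w) i
      = Real.sqrt (b (i : ι)) * ((C (uk k)) (i : ι) - (C u) (i : ι)) := by
    intro i
    have hsq : Real.sqrt (b (i : ι)) ≠ 0 := (Real.sqrt_pos.mpr (hbpos _)).ne'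
    have h1 : (Matrix.toEuclideanLin N w) i = ∑ j : F k, N i j * w j := by
      rw [Matrix.toEuclideanLin_apply]
      simp [Matrix.mulVec, dotProduct]
    have h2 : ∑ j : F k, N i j * w j
        = Real.sqrt (b (i : ι)) * ∑ j : F k, Amat i j * u (j : ι) := by
      rw [Finset.mul_sum]
      refine Finset.sum_congr rfl fun j _ => ?_
      have hsqj : Real.sqrt (b (j : ι)) ≠ 0 := (Real.sqrt_pos.mpr (hbpos _)).ne'
      rw [hNdef, hwapp]
      dsimp only
      field_simp
    have h3 : (lam • w) i = lam * (u (i : ι) / Real.sqrt (b (i : ι))) := by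
      rw [PiLp.smul_apply, hwapp, smul_eq_mul]
    have h4 : lam * (u (i : ι) / Real.sqrt (b (i : ι)))
        = Real.sqrt (b (i : ι)) * (C u) (i : ι) := by
      have hb' : b (i : ι) = Real.sqrt (b (i : ι)) * Real.sqrt (b (i : ι)) :=
        (Real.mul_self_sqrt (hbpos _).le).symm
      have h5 := hcoord (i : ι)
      rw [← mul_div_assoc, div_eq_iff hsq, ← h5]
      nth_rewrite 1 [hb']
      ring
    rw [PiLp.sub_apply, h1, h2, hsum_eq i, h3, h4]
    ring
  -- residual norm bound
  set d : lp (fun _ : ι => ℝ) 2 := C (uk k - u) with hd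
  have hdapp : ∀ i : ι, (C (uk k)) i - (C u) i = d i := by
    intro i
    rw [hd, map_sub, lp.coeFn_sub]
    simp
  have hrnorm : ‖Matrix.toEuclideanLin N w - lam • w‖
      ≤ Real.sqrt β * (‖C‖ * ‖uk k - u‖) := by
    rw [EuclideanSpace.norm_eq]
    have hstep : ∀ i : F k, ‖(Matrix.toEuclideanLin N w - lam • w) i‖ ^ 2
        ≤ β * ‖d (i : ι)‖ ^ 2 := by
      intro i
      have hb2 : ‖Real.sqrt (b (i : ι))‖ ^ 2 ≤ β := by
        rw [Real.norm_eq_abs, sq_abs, Real.sq_sqrt (hbpos _).le]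
        exact hβb _
      calc ‖(Matrix.toEuclideanLin N w - lam • w) i‖ ^ 2
          = ‖Real.sqrt (b (i : ι))‖ ^ 2 * ‖d (i : ι)‖ ^ 2 := by
            rw [hres i, hdapp, norm_mul, mul_pow]
        _ ≤ β * ‖d (i : ι)‖ ^ 2 := mul_le_mul_of_nonneg_right hb2 (sq_nonneg _)
    have hsum2 : ∑ i : F k, ‖d (i : ι)‖ ^ 2 ≤ ‖d‖ ^ 2 := by
      have h7 : ∀ x : ℝ, x ^ (2 : ℝ≥0∞).toReal = x ^ 2 := by
        intro x
        rw [show (2 : ℝ≥0∞).toReal = ((2 : ℕ) : ℝ) by norm_num, Real.rpow_natCast]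
      have h6 := lp.sum_rpow_le_norm_rpow (p := 2)
        (show (0:ℝ) < (2 : ℝ≥0∞).toReal by norm_num) d (F k)
      rw [Finset.sum_coe_sort (F k) (fun i => ‖d i‖ ^ 2)]
      calc ∑ i ∈ F k, ‖d i‖ ^ 2
          = ∑ i ∈ F k, ‖d i‖ ^ (2 : ℝ≥0∞).toReal :=
            Finset.sum_congr rfl fun i _ => (h7 _).symm
        _ ≤ ‖d‖ ^ (2 : ℝ≥0∞).toReal := h6
        _ = ‖d‖ ^ 2 := h7 _
    calc Real.sqrt (∑ i : F k, ‖(Matrix.toEuclideanLin N w - lam • w) i‖ ^ 2)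
        ≤ Real.sqrt (β * ‖d‖ ^ 2) := by
          apply Real.sqrt_le_sqrt
          calc ∑ i : F k, ‖(Matrix.toEuclideanLin N w - lam • w) i‖ ^ 2
              ≤ ∑ i : F k, β * ‖d (i : ι)‖ ^ 2 := Finset.sum_le_sum fun i _ => hstep i
            _ = β * ∑ i : F k, ‖d (i : ι)‖ ^ 2 := by rw [Finset.mul_sum]
            _ ≤ β * ‖d‖ ^ 2 := mul_le_mul_of_nonneg_left hsum2 hβpos.le
      _ = Real.sqrt β * ‖d‖ := by
          rw [Real.sqrt_mul hβpos.le, Real.sqrt_sq (norm_nonneg _)]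
      _ ≤ Real.sqrt β * (‖C‖ * ‖uk k - u‖) :=
          mul_le_mul_of_nonneg_left (C.le_opNorm _) (Real.sqrt_nonneg _)
  -- lower bound on ‖w‖
  have hwlow : c0 ≤ ‖w‖ := by
    rw [EuclideanSpace.norm_eq]
    have h8 : c0 = Real.sqrt (‖w ⟨j0, hj0k⟩‖ ^ 2) := by
      rw [Real.sqrt_sq (norm_nonneg _), hwapp, hc0def]
      rw [Real.norm_eq_abs, abs_div, abs_of_nonneg (Real.sqrt_nonneg _)]
    rw [h8]
    apply Real.sqrt_le_sqrt
    exact Finset.single_le_sum (fun i _ => sq_nonneg ‖w i‖) (Finset.mem_univ _)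
  -- apply the residual bound
  obtain ⟨μ, hμN, hμbound⟩ := aux_herm_residual hN lam w
  -- transfer eigenvalue to M k
  obtain ⟨x, hx0, hxe⟩ := (aux_matrix_mem_spectrum_iff N μ).mp hμN
  have hμM : μ ∈ spectrum ℝ (M k) := by
    refine (aux_matrix_mem_spectrum_iff (M k) μ).mpr
      ⟨fun i => Real.sqrt (b (i : ι)) * x i, ?_, ?_⟩
    · intro hy
      apply hx0
      funext i
      have h9 := congrFun hy i
      have hsq : Real.sqrt (b (i : ι)) ≠ 0 := (Real.sqrt_pos.mpr (hbpos _)).ne'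
      simpa [hsq] using h9
    · funext i
      have h10 := congrFun hxe i
      have hb' : b (i : ι) = Real.sqrt (b (i : ι)) * Real.sqrt (b (i : ι)) :=
        (Real.mul_self_sqrt (hbpos _).le).symm
      have h11 : (M k).mulVec (fun i => Real.sqrt (b (i : ι)) * x i) i
          = Real.sqrt (b (i : ι)) * (N.mulVec x i) := by
        rw [Matrix.mulVec, Matrix.mulVec, dotProduct, dotProduct,
          Finset.mul_sum]
        refine Finset.sum_congr rfl fun j _ => ?_
        rw [hM k i j, hNdef]
        dsimp only
        rw [hAmat]
        dsimp only
        rw [he]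
        dsimp only
        nth_rewrite 1 [hb']
        ring
      rw [h11, h10]
      simp only [Pi.smul_apply, smul_eq_mul]
      ring
  refine ⟨μ, hμM, ?_⟩
  -- final estimate
  have hchain : |μ - lam| * c0 ≤ (Real.sqrt β * ‖C‖ + 1) * ‖uk k - u‖ := by
    calc |μ - lam| * c0 ≤ |μ - lam| * ‖w‖ :=
          mul_le_mul_of_nonneg_left hwlow (abs_nonneg _)
      _ ≤ ‖Matrix.toEuclideanLin N w - lam • w‖ := hμbound
      _ ≤ Real.sqrt β * (‖C‖ * ‖uk k - u‖) := hrnorm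
      _ ≤ (Real.sqrt β * ‖C‖ + 1) * ‖uk k - u‖ := by
          rw [← mul_assoc]
          exact mul_le_mul_of_nonneg_right (le_add_of_nonneg_right zero_le_one)
            (norm_nonneg _)
  have hfinal : |μ - lam| * c0 < ε * c0 := by
    calc |μ - lam| * c0 ≤ (Real.sqrt β * ‖C‖ + 1) * ‖uk k - u‖ := hchain
      _ < (Real.sqrt β * ‖C‖ + 1) * δ := by
          exact mul_lt_mul_of_pos_left hkK1 hden
      _ = ε * c0 := by
          rw [hδdef, mul_comm, div_mul_cancel₀ _ hden.ne']
  exact lt_of_mul_lt_mul_right hfinal hc0.le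
end

section
/- Let v ∈ ℝ³ (Euclidean space) be nonzero, and let α ∈ ℝ be such that Complex.exp (Complex.I * α) ≠ 1. Let Λ := {m • v | m : ℤ} ⊆ ℝ³. For M : ℕ and x ∈ ℝ³, define the symmetric partial sum f_M(x) := ∑_{m ∈ Finset.Icc (−(M:ℤ)) M} Complex.exp (Complex.I * α * m) * (−1 / (4 * π * ‖x − m • v‖)). Then there exists a function g : ℝ³ → ℂ such that for every compact set K ⊆ ℝ³ with K ∩ Λ = ∅, the sequence f_M converges to g uniformly on K as M → ∞. -/
open scoped BigOperators

open Finset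

lemma qpg_geom_bound (c : ℂ) (hc : ‖c‖ = 1) (h1 : c ≠ 1) (m n : ℕ) :
    ‖∑ k ∈ Finset.Icc m n, c ^ k‖ ≤ 2 / ‖1 - c‖ := by
  have hne : 1 - c ≠ 0 := sub_ne_zero.mpr (Ne.symm h1)
  have h10 : (0:ℝ) < ‖1 - c‖ := norm_pos_iff.mpr hne
  rcases le_or_gt m n with h | h
  · rw [← Finset.Ico_add_one_right_eq_Icc, Finset.sum_Ico_eq_sum_range]
    have e1 : ∑ i ∈ Finset.range (n + 1 - m), c ^ (m + i)
        = c ^ m * ∑ i ∈ Finset.range (n + 1 - m), c ^ i := by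
      rw [Finset.mul_sum]; exact Finset.sum_congr rfl fun i _ => pow_add c m i
    rw [e1, geom_sum_eq h1, norm_mul, norm_pow, hc, one_pow, one_mul, norm_div]
    rw [norm_sub_rev c 1]
    apply div_le_div_of_nonneg_right ?_ h10.le
    calc ‖c ^ (n + 1 - m) - 1‖ ≤ ‖c ^ (n + 1 - m)‖ + ‖(1:ℂ)‖ := norm_sub_le _ _
    _ = 2 := by rw [norm_pow, hc, one_pow, norm_one]; norm_num
  · rw [Finset.Icc_eq_empty (by omega), Finset.sum_empty, norm_zero]
    positivity

lemma qpg_abel (c : ℂ) (b : ℕ → ℂ) (m n : ℕ) (h : m ≤ n) :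
    ∑ k ∈ Icc m n, c ^ k * b k
      = (∑ k ∈ Icc m n, c ^ k) * b n
        + ∑ j ∈ Ico m n, (∑ k ∈ Icc m j, c ^ k) * (b j - b (j + 1)) := by
  induction n, h using Nat.le_induction with
  | base => simp
  | succ n hmn ih =>
    rw [Finset.sum_Icc_succ_top (by omega : m ≤ n + 1) (fun k => c ^ k * b k),
        Finset.sum_Icc_succ_top (by omega : m ≤ n + 1) (fun k => c ^ k),
        Finset.sum_Ico_succ_top (by omega : m ≤ n), ih]
    ring

lemma qpg_telescope (m n : ℕ) (h : m ≤ n) :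
    ∑ j ∈ Ico m n, ((1:ℝ)/j - 1/(j+1)) = 1/m - 1/n := by
  induction n, h using Nat.le_induction with
  | base => simp
  | succ n hmn ih =>
    rw [Finset.sum_Ico_succ_top (by omega), ih]
    push_cast
    ring

lemma qpg_dirichlet (c : ℂ) (hc : ‖c‖ = 1) (h1 : c ≠ 1) (b : ℕ → ℂ)
    (A D : ℝ) (hA : 0 ≤ A) (hD : 0 ≤ D) (N : ℕ) (hN : 1 ≤ N)
    (hb : ∀ k : ℕ, N ≤ k → ‖b k‖ ≤ A / k)
    (hd : ∀ k : ℕ, N ≤ k → ‖b k - b (k+1)‖ ≤ D * (1/k - 1/(k+1)))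
    (m n : ℕ) (hm : N ≤ m) :
    ‖∑ k ∈ Icc m n, c ^ k * b k‖ ≤ (2/‖1-c‖) * (A + D) / m := by
  have hne : 1 - c ≠ 0 := sub_ne_zero.mpr (Ne.symm h1)
  have h10 : (0:ℝ) < ‖1 - c‖ := norm_pos_iff.mpr hne
  have hB : (0:ℝ) ≤ 2/‖1-c‖ := by positivity
  have hmpos : (0:ℝ) < m := by exact_mod_cast Nat.lt_of_lt_of_le Nat.zero_lt_one (hN.trans hm)
  rcases le_or_gt m n with h | h
  · have hnpos : (0:ℝ) < n := lt_of_lt_of_le hmpos (by exact_mod_cast h)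
    rw [qpg_abel c b m n h]
    have t1 : ‖(∑ k ∈ Icc m n, c ^ k) * b n‖ ≤ (2/‖1-c‖) * (A / n) := by
      rw [norm_mul]
      exact mul_le_mul (qpg_geom_bound c hc h1 m n) (hb n (hm.trans h)) (norm_nonneg _) hB
    have t2 : ‖∑ j ∈ Ico m n, (∑ k ∈ Icc m j, c ^ k) * (b j - b (j + 1))‖
        ≤ (2/‖1-c‖) * (D * (1/m - 1/n)) := by
      calc ‖∑ j ∈ Ico m n, (∑ k ∈ Icc m j, c ^ k) * (b j - b (j + 1))‖
          ≤ ∑ j ∈ Ico m n, ‖(∑ k ∈ Icc m j, c ^ k) * (b j - b (j + 1))‖ :=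
            norm_sum_le _ _
        _ ≤ ∑ j ∈ Ico m n, (2/‖1-c‖) * (D * (1/(j:ℝ) - 1/(j+1))) := by
            refine Finset.sum_le_sum fun j hj => ?_
            rw [norm_mul]
            exact mul_le_mul (qpg_geom_bound c hc h1 m j)
              (hd j (hm.trans (Finset.mem_Ico.mp hj).1)) (norm_nonneg _) hB
        _ = (2/‖1-c‖) * (D * (1/m - 1/n)) := by
            rw [← Finset.mul_sum, ← Finset.mul_sum, qpg_telescope m n h]
    calc ‖(∑ k ∈ Icc m n, c ^ k) * b n
          + ∑ j ∈ Ico m n, (∑ k ∈ Icc m j, c ^ k) * (b j - b (j + 1))‖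
        ≤ (2/‖1-c‖) * (A / n) + (2/‖1-c‖) * (D * (1/m - 1/n)) :=
          (norm_add_le _ _).trans (add_le_add t1 t2)
      _ ≤ (2/‖1-c‖) * (A / m) + (2/‖1-c‖) * (D * (1/m)) := by
          have h1n : A / (n:ℝ) ≤ A / m :=
            div_le_div_of_nonneg_left hA hmpos (by exact_mod_cast h)
          have h2n : 1/(m:ℝ) - 1/n ≤ 1/m := by
            have : (0:ℝ) ≤ 1/(n:ℝ) := by positivity
            linarith
          exact add_le_add (mul_le_mul_of_nonneg_left h1n hB)
            (mul_le_mul_of_nonneg_left (mul_le_mul_of_nonneg_left h2n hD) hB)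
      _ = (2/‖1-c‖) * (A + D) / m := by field_simp
  · rw [Finset.Icc_eq_empty (by omega), Finset.sum_empty, norm_zero]
    positivity

lemma qpg_sym_split (F : ℤ → ℂ) (M M' : ℕ) (h : M ≤ M') :
    ∑ m ∈ Finset.Icc (-(M' : ℤ)) (M' : ℤ), F m
      = (∑ m ∈ Finset.Icc (-(M : ℤ)) (M : ℤ), F m)
        + ∑ k ∈ Finset.Icc (M + 1) M', (F (k : ℤ) + F (-(k : ℤ))) := by
  induction M', h using Nat.le_induction with
  | base => simp
  | succ n hmn ih =>
    have e1 : Finset.Icc (-((n:ℤ) + 1)) ((n:ℤ) + 1)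
        = insert (-((n:ℤ) + 1)) (insert ((n:ℤ) + 1) (Finset.Icc (-(n:ℤ)) (n:ℤ))) := by
      ext a
      simp only [Finset.mem_Icc, Finset.mem_insert]
      omega
    have h1 : -((n:ℤ) + 1) ∉ insert ((n:ℤ) + 1) (Finset.Icc (-(n:ℤ)) (n:ℤ)) := by
      simp only [Finset.mem_insert, Finset.mem_Icc]
      omega
    have h2 : ((n:ℤ) + 1) ∉ Finset.Icc (-(n:ℤ)) (n:ℤ) := by
      simp only [Finset.mem_Icc]; omega
    rw [show ((n+1 : ℕ) : ℤ) = (n:ℤ) + 1 by push_cast; ring, show -((n:ℤ)+1) = -((n:ℤ)+1) from rfl]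
    rw [e1, Finset.sum_insert h1, Finset.sum_insert h2, ih,
        Finset.sum_Icc_succ_top (by omega : M + 1 ≤ n + 1) (fun k => F (k:ℤ) + F (-(k:ℤ)))]
    push_cast
    ring

set_option maxHeartbeats 1600000 in
/-- For a one-dimensional lattice `Λ = ℤv` in `ℝ³` and quasi-periodicity `α` with
`e^{iα} ≠ 1`, the series `∑_{m∈Λ} G(x − m v) e^{iαm}` (with `G(x) = −1/(4π‖x‖)` the Laplace
Green's function) converges uniformly on compact sets avoiding the lattice. -/
theorem quasiperiodic_green_function_uniform_convergence
    (v : EuclideanSpace ℝ (Fin 3)) (hv : v ≠ 0)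
    (α : ℝ) (hα : Complex.exp (Complex.I * (α : ℂ)) ≠ 1)
    (Λ : Set (EuclideanSpace ℝ (Fin 3))) (hΛ : Λ = {x | ∃ m : ℤ, x = m • v})
    (f : ℕ → EuclideanSpace ℝ (Fin 3) → ℂ)
    (hf : ∀ (M : ℕ) (x : EuclideanSpace ℝ (Fin 3)),
      f M x = ∑ m ∈ Finset.Icc (-(M : ℤ)) (M : ℤ),
        Complex.exp (Complex.I * (α : ℂ) * (m : ℂ)) *
          (-1 / (4 * (Real.pi : ℂ) * (‖x - m • v‖ : ℂ)))) :
    ∃ g : EuclideanSpace ℝ (Fin 3) → ℂ,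
      ∀ K : Set (EuclideanSpace ℝ (Fin 3)), IsCompact K → K ∩ Λ = ∅ →
        TendstoUniformlyOn f g Filter.atTop K := by
  classical
  have hπ : (0:ℝ) < Real.pi := Real.pi_pos
  set c : ℂ := Complex.exp (Complex.I * (α : ℂ)) with hcdef
  set c' : ℂ := Complex.exp (-(Complex.I * (α : ℂ))) with hc'def
  have hcc' : c * c' = 1 := by
    rw [hcdef, hc'def, ← Complex.exp_add]
    simp
  have hcn : ‖c‖ = 1 := by
    rw [hcdef, Complex.norm_exp]
    simp
  have hc'n : ‖c'‖ = 1 := by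
    rw [hc'def, Complex.norm_exp]
    simp
  have hc1 : c ≠ 1 := hα
  have hc'1 : c' ≠ 1 := by
    intro h
    rw [h, mul_one] at hcc'
    exact hα hcc'
  have hv0 : (0:ℝ) < ‖v‖ := norm_pos_iff.mpr hv
  refine ⟨fun x => Filter.limUnder Filter.atTop (fun M => f M x), ?_⟩
  intro K hK _hKΛ
  obtain ⟨R, hR⟩ := hK.isBounded.exists_norm_le
  obtain ⟨N₀, hN₀⟩ := exists_nat_ge (max 1 (2*R/‖v‖))
  have hN₀1 : 1 ≤ N₀ := by
    have h1 : (1:ℝ) ≤ N₀ := le_trans (le_max_left _ _) hN₀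
    exact_mod_cast h1
  have hN₀R : 2*R ≤ (N₀:ℝ) * ‖v‖ := by
    have h2 : 2*R/‖v‖ ≤ (N₀:ℝ) := le_trans (le_max_right _ _) hN₀
    calc 2*R = (2*R/‖v‖)*‖v‖ := by field_simp
    _ ≤ (N₀:ℝ)*‖v‖ := mul_le_mul_of_nonneg_right h2 hv0.le
  -- lower bound for distances to far lattice points
  have hlow : ∀ x ∈ K, ∀ s : ℤ, N₀ ≤ s.natAbs → (s.natAbs : ℝ) * ‖v‖ / 2 ≤ ‖x - s • v‖ := by
    intro x hx s hs
    have h1 : ‖s • v‖ - ‖x‖ ≤ ‖x - s • v‖ := by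
      rw [norm_sub_rev]
      exact norm_sub_norm_le _ _
    have h2 : ‖s • v‖ = (s.natAbs : ℝ) * ‖v‖ := by
      rw [← Int.cast_smul_eq_zsmul ℝ, norm_smul, Real.norm_eq_abs, Nat.cast_natAbs, Int.cast_abs]
    have h3 : (N₀:ℝ) * ‖v‖ ≤ (s.natAbs:ℝ) * ‖v‖ := by
      apply mul_le_mul_of_nonneg_right _ hv0.le
      exact_mod_cast hs
    have h4 := hR x hx
    rw [h2] at h1
    linarith
  set A : ℝ := 1/(2*Real.pi*‖v‖) with hAdef
  set D : ℝ := 1/(Real.pi*‖v‖) with hDdef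
  have hA : (0:ℝ) ≤ A := by positivity
  have hD : (0:ℝ) ≤ D := by positivity
  -- one-sided tail bound
  have hside : ∀ x ∈ K, ∀ σ : ℤ, σ.natAbs = 1 → ∀ cc : ℂ, ‖cc‖ = 1 → cc ≠ 1 →
      ∀ m n : ℕ, N₀ ≤ m →
      ‖∑ k ∈ Finset.Icc m n,
          cc ^ k * (-1 / (4 * (Real.pi : ℂ) * (‖x - (σ*(k:ℤ)) • v‖ : ℂ)))‖
        ≤ (2/‖1-cc‖) * (A + D) / m := by
    intro x hx σ hσ cc hcc hcc1 m n hm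
    have hr : ∀ k : ℕ, N₀ ≤ k → (k:ℝ) * ‖v‖ / 2 ≤ ‖x - (σ*(k:ℤ)) • v‖ := by
      intro k hk
      have : (σ*(k:ℤ)).natAbs = k := by
        rw [Int.natAbs_mul, hσ, one_mul, Int.natAbs_natCast]
      have h := hlow x hx (σ*(k:ℤ)) (by rw [this]; exact hk)
      rwa [this] at h
    have hrpos : ∀ k : ℕ, N₀ ≤ k → (0:ℝ) < ‖x - (σ*(k:ℤ)) • v‖ := by
      intro k hk
      refine lt_of_lt_of_le ?_ (hr k hk)
      have hk1 : (1:ℝ) ≤ (k:ℝ) := by exact_mod_cast hN₀1.trans hk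
      positivity
    apply qpg_dirichlet cc hcc hcc1
      (fun k : ℕ => -1 / (4 * (Real.pi : ℂ) * (‖x - (σ*(k:ℤ)) • v‖ : ℂ)))
      A D hA hD N₀ hN₀1 ?_ ?_ m n hm
    · -- norm bound
      intro k hk
      have hk1 : (1:ℝ) ≤ (k:ℝ) := by exact_mod_cast hN₀1.trans hk
      have hrp := hrpos k hk
      have hrk := hr k hk
      show ‖(-1 / (4 * (Real.pi : ℂ) * (‖x - (σ*(k:ℤ)) • v‖ : ℂ)) : ℂ)‖ ≤ A / (k:ℝ)
      have e1 : (-1 / (4 * (Real.pi : ℂ) * (‖x - (σ*(k:ℤ)) • v‖ : ℂ)))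
          = (((-1 / (4 * Real.pi * ‖x - (σ*(k:ℤ)) • v‖)) : ℝ) : ℂ) := by
        push_cast
        ring
      have hden : (0:ℝ) < 4 * Real.pi * ‖x - (σ*(k:ℤ)) • v‖ :=
        mul_pos (by linarith) hrp
      rw [e1, Complex.norm_real, Real.norm_eq_abs, abs_div, abs_neg, abs_one,
        abs_of_pos hden]
      have eA : A / (k:ℝ) = 1 / (2 * Real.pi * ‖v‖ * (k:ℝ)) := by
        rw [hAdef, div_div]
      rw [eA]
      apply one_div_le_one_div_of_le (by positivity)
      nlinarith [hrk, hπ, hv0]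
    · -- variation bound
      intro k hk
      have hk1 : (1:ℝ) ≤ (k:ℝ) := by exact_mod_cast hN₀1.trans hk
      have hrp := hrpos k hk
      have hrp' := hrpos (k+1) (hk.trans (Nat.le_succ k))
      have hrk := hr k hk
      have hrk' := hr (k+1) (hk.trans (Nat.le_succ k))
      set r1 : ℝ := ‖x - (σ*(k:ℤ)) • v‖ with hr1def
      set r2 : ℝ := ‖x - (σ*((k+1:ℕ):ℤ)) • v‖ with hr2def
      have hdiff : |r1 - r2| ≤ ‖v‖ := by
        have h5 : |r1 - r2| ≤ ‖(x - (σ*(k:ℤ)) • v) - (x - (σ*((k+1:ℕ):ℤ)) • v)‖ :=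
          abs_norm_sub_norm_le _ _
      
        have h6 : (x - (σ*(k:ℤ)) • v) - (x - (σ*((k+1:ℕ):ℤ)) • v)
            = (σ*((k+1:ℕ):ℤ) - σ*(k:ℤ)) • v := by
          rw [sub_smul]
          abel
        have h7 : (σ*((k+1:ℕ):ℤ) - σ*(k:ℤ)) = σ := by
          push_cast
          ring
        rw [h6, h7] at h5
        have h8 : ‖σ • v‖ = ‖v‖ := by
          rw [← Int.cast_smul_eq_zsmul ℝ, norm_smul, Real.norm_eq_abs, ← Int.cast_abs,
            Int.abs_eq_natAbs, hσ]
          push_cast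
          ring
        rwa [h8] at h5
      have hkpos : (0:ℝ) < (k:ℝ) := by linarith
      have hden : (0:ℝ) < 4 * Real.pi * r1 * r2 :=
        mul_pos (mul_pos (by linarith) hrp) hrp'
      have hrk'' : ((k:ℝ)+1) * ‖v‖ / 2 ≤ r2 := by
        push_cast at hrk'
        linarith
      show ‖(-1 / (4 * (Real.pi : ℂ) * (r1 : ℂ)) : ℂ)
          - (-1 / (4 * (Real.pi : ℂ) * (r2 : ℂ)) : ℂ)‖ ≤ D * (1/(k:ℝ) - 1/((k:ℝ)+1))
      have e1 : (-1 / (4 * (Real.pi : ℂ) * (r1 : ℂ))) - (-1 / (4 * (Real.pi : ℂ) * (r2 : ℂ)))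
          = (((-1 / (4 * Real.pi * r1) + 1 / (4 * Real.pi * r2)) : ℝ) : ℂ) := by
        push_cast
        ring
      rw [e1, Complex.norm_real, Real.norm_eq_abs]
      have e2 : -1 / (4 * Real.pi * r1) + 1 / (4 * Real.pi * r2)
          = (r1 - r2) / (4 * Real.pi * r1 * r2) := by
        field_simp
        ring
      have eD : D * (1/(k:ℝ) - 1/((k:ℝ)+1))
          = 1 / (Real.pi * ‖v‖ * ((k:ℝ) * ((k:ℝ)+1))) := by
        rw [hDdef]
        field_simp
        ring
      rw [e2, abs_div, abs_of_pos hden, eD]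
      have key : ((k:ℝ) * ‖v‖ / 2) * (((k:ℝ)+1) * ‖v‖ / 2) ≤ r1 * r2 :=
        mul_le_mul hrk hrk'' (by positivity) (by positivity)
      calc |r1 - r2| / (4 * Real.pi * r1 * r2)
          ≤ ‖v‖ / (4 * Real.pi * r1 * r2) := by gcongr
        _ ≤ 1 / (Real.pi * ‖v‖ * ((k:ℝ) * ((k:ℝ)+1))) := by
            rw [div_le_div_iff₀ hden (by positivity)]
            nlinarith [mul_le_mul_of_nonneg_left key
              (by positivity : (0:ℝ) ≤ 4 * Real.pi), hπ, hv0]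
  set C : ℝ := (2/‖1-c‖) * (A + D) + (2/‖1-c'‖) * (A + D) with hCdef
  have hC : (0:ℝ) ≤ C := by positivity
  have est : ∀ x ∈ K, ∀ M M' : ℕ, N₀ ≤ M + 1 → M ≤ M' →
      ‖f M' x - f M x‖ ≤ C / ((M + 1 : ℕ) : ℝ) := by
    intro x hx M M' hM hMM'
    rw [hf M' x, hf M x,
      qpg_sym_split (fun m : ℤ => Complex.exp (Complex.I * (α:ℂ) * (m:ℂ)) *
        (-1 / (4 * (Real.pi:ℂ) * (‖x - m • v‖ : ℂ)))) M M' hMM',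
      add_sub_cancel_left]
    have hcong : ∀ k ∈ Finset.Icc (M+1) M',
        Complex.exp (Complex.I * (α:ℂ) * (((k:ℤ)):ℂ)) *
          (-1 / (4 * (Real.pi:ℂ) * (‖x - (k:ℤ) • v‖ : ℂ)))
        + Complex.exp (Complex.I * (α:ℂ) * (Int.cast (-(k:ℤ)) : ℂ)) *
          (-1 / (4 * (Real.pi:ℂ) * (‖x - (-(k:ℤ)) • v‖ : ℂ)))
        = c ^ k * (-1 / (4 * (Real.pi:ℂ) * (‖x - ((1:ℤ)*(k:ℤ)) • v‖ : ℂ)))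
          + c' ^ k * (-1 / (4 * (Real.pi:ℂ) * (‖x - ((-1:ℤ)*(k:ℤ)) • v‖ : ℂ))) := by
      intro k _
      have h1 : ((1:ℤ)*(k:ℤ)) = (k:ℤ) := one_mul _
      have h2 : ((-1:ℤ)*(k:ℤ)) = -(k:ℤ) := by ring
      rw [h1, h2]
      have ha' : Complex.exp (Complex.I * (α:ℂ) * (((k:ℤ)):ℂ)) = c ^ k := by
        rw [show Complex.I * (α:ℂ) * (((k:ℤ)):ℂ) = ((k:ℕ):ℂ) * (Complex.I * (α:ℂ)) by
          push_cast; ring, Complex.exp_nat_mul, hcdef]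
      have hb' : Complex.exp (Complex.I * (α:ℂ) * (Int.cast (-(k:ℤ)) : ℂ)) = c' ^ k := by
        rw [show Complex.I * (α:ℂ) * (Int.cast (-(k:ℤ)) : ℂ) = ((k:ℕ):ℂ) * (-(Complex.I * (α:ℂ))) by
          push_cast; ring, Complex.exp_nat_mul, hc'def]
      rw [ha', hb']
    have H1 := hside x hx 1 rfl c hcn hc1 (M+1) M' hM
    have H2 := hside x hx (-1) (by decide) c' hc'n hc'1 (M+1) M' hM
    have e : (∑ k ∈ Finset.Icc (M+1) M',
          (Complex.exp (Complex.I * (α:ℂ) * (((k:ℤ)):ℂ)) *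
            (-1 / (4 * (Real.pi:ℂ) * (‖x - (k:ℤ) • v‖ : ℂ)))
          + Complex.exp (Complex.I * (α:ℂ) * (Int.cast (-(k:ℤ)) : ℂ)) *
            (-1 / (4 * (Real.pi:ℂ) * (‖x - (-(k:ℤ)) • v‖ : ℂ)))))
        = (∑ k ∈ Finset.Icc (M+1) M',
            c ^ k * (-1 / (4 * (Real.pi:ℂ) * (‖x - ((1:ℤ)*(k:ℤ)) • v‖ : ℂ))))
          + ∑ k ∈ Finset.Icc (M+1) M',
            c' ^ k * (-1 / (4 * (Real.pi:ℂ) * (‖x - ((-1:ℤ)*(k:ℤ)) • v‖ : ℂ))) :=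
      (Finset.sum_congr rfl hcong).trans Finset.sum_add_distrib
    refine le_of_eq_of_le (congrArg norm e) ?_
    refine le_trans (norm_add_le _ _) (le_of_le_of_eq (add_le_add H1 H2) ?_)
    rw [hCdef]
    ring
  have hUC : UniformCauchySeqOn f Filter.atTop K := by
    rw [Metric.uniformCauchySeqOn_iff]
    intro ε hε
    obtain ⟨N₁, hN₁⟩ := exists_nat_gt (C / ε)
    refine ⟨max N₀ N₁, fun p hp q hq x hx => ?_⟩
    have main : ∀ a b : ℕ, max N₀ N₁ ≤ a → a ≤ b → dist (f b x) (f a x) < ε := by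
      intro a b ha hab
      rw [dist_eq_norm]
      have hN₀a : N₀ ≤ a + 1 := ((le_max_left N₀ N₁).trans ha).trans (Nat.le_succ a)
      have h1 : ‖f b x - f a x‖ ≤ C / ((a + 1 : ℕ) : ℝ) := est x hx a b hN₀a hab
      have hN₁a : (N₁:ℝ) ≤ ((a + 1 : ℕ) : ℝ) := by
        exact_mod_cast ((le_max_right N₀ N₁).trans ha).trans (Nat.le_succ a)
      have hapos : (0:ℝ) < ((a + 1 : ℕ) : ℝ) := by exact_mod_cast Nat.succ_pos a
      have h3 : C < (N₁:ℝ) * ε := (div_lt_iff₀ hε).mp hN₁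
      have h2 : C / ((a + 1 : ℕ) : ℝ) < ε := by
        rw [div_lt_iff₀ hapos]
        nlinarith [hε.le]
      linarith
    rcases le_total p q with h | h
    · rw [dist_comm]
      exact main p q hp h
    · exact main q p hq h
  refine hUC.tendstoUniformlyOn_of_tendsto ?_
  intro x hx
  obtain ⟨L, hL⟩ := cauchySeq_tendsto_of_complete (hUC.cauchySeq hx)
  have hlim : Filter.limUnder Filter.atTop (fun M => f M x) = L := hL.limUnder_eq
  simpa only [hlim] using hL
end
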